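/- Let G be a connected chordal claw-free graph with clique tree T_G. If a max clique B of G has a fork triangle, then the degree of B in T_G is exactly 3. -/

import Mathlib

open SimpleGraph

/-- A graph is *chordal* if every cycle of length at least 4 has a chord, i.e. an
edge of the graph joining two vertices of the cycle that is not an edge of the cycle. -/
def IsChordal {V : Type*} (G : SimpleGraph V) : Prop :=
  ∀ (v : V) (c : G.Walk v v), c.IsCycle → 4 ≤ c.length →
    ∃ u w : V, u ∈ c.support ∧ w ∈ c.support ∧ G.Adj u w ∧ s(u, w) ∉ c.edges

/-- A graph is *claw-free* if it has no induced subgraph isomorphic to the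
complete bipartite graph `K_{1,3}`. -/
def ClawFree {V : Type*} (G : SimpleGraph V) : Prop :=
  IsEmpty (completeBipartiteGraph (Fin 1) (Fin 3) ↪g G)

/-- A *max clique* of `G` is a maximal clique. -/
def IsMaximalClique {V : Type*} (G : SimpleGraph V) (s : Set V) : Prop :=
  G.IsClique s ∧ ∀ t : Set V, G.IsClique t → s ⊆ t → s = t

/-- The type of max cliques of `G`. -/
abbrev MaxClique {V : Type*} (G : SimpleGraph V) : Type _ :=
  {s : Set V // IsMaximalClique G s}

/-- `M_v`: the set of max cliques of `G` containing the vertex `v`. -/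
def cliquesOf {V : Type*} (G : SimpleGraph V) (v : V) : Set (MaxClique G) :=
  {A | v ∈ A.1}

/-- A *clique tree* of `G`: a tree whose vertices are the max cliques of `G` such
that for every vertex `v` of `G` the subgraph induced by `M_v` is connected. -/
structure IsCliqueTree {V : Type*} (G : SimpleGraph V)
    (T : SimpleGraph (MaxClique G)) : Prop where
  isTree : T.IsTree
  induced_connected : ∀ v : V, (T.induce (cliquesOf G v)).Connected

/-- The subgraph of `T` induced by `S` is a path in `T`: there is a path of `T`
whose vertices are exactly `S` and whose edges are exactly the edges of `T`
between vertices of `S`. -/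
def InducedPath {M : Type*} (T : SimpleGraph M) (S : Set M) : Prop :=
  ∃ (a b : M) (p : T.Walk a b), p.IsPath ∧ (∀ A, A ∈ p.support ↔ A ∈ S) ∧
    ∀ A B, A ∈ S → B ∈ S → (T.Adj A B ↔ s(A, B) ∈ p.edges)

/-- `B` is a *star clique*: every vertex of `B` is contained in at most one
neighbor of `B` in the clique tree `T`. -/
def IsStarClique {V : Type*} (G : SimpleGraph V) (T : SimpleGraph (MaxClique G))
    (B : MaxClique G) : Prop :=
  ∀ v ∈ B.1, ∀ A A' : MaxClique G, T.Adj B A → T.Adj B A' →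
    v ∈ A.1 → v ∈ A'.1 → A = A'

/-- `B` is a *fork clique*: `B` has degree 3 in the clique tree `T`, for every
vertex `v ∈ B` there are two distinct neighbors `A, A'` of `B` with
`M_v = {B, A, A'}`, and for all distinct neighbors `A, A'` of `B` there is a
vertex `v` with `M_v = {B, A, A'}`. -/
def IsForkClique {V : Type*} (G : SimpleGraph V) (T : SimpleGraph (MaxClique G))
    (B : MaxClique G) : Prop :=
  (T.neighborSet B).ncard = 3 ∧
  (∀ v ∈ B.1, ∃ A A' : MaxClique G, A ≠ A' ∧ T.Adj B A ∧ T.Adj B A' ∧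
      cliquesOf G v = {B, A, A'}) ∧
  ∀ A A' : MaxClique G, T.Adj B A → T.Adj B A' → A ≠ A' →
      ∃ v : V, cliquesOf G v = {B, A, A'}

/-- The paths `T[S₁]` and `T[S₂]` *fork in `A`*: there is a fork
`(A', A, {A_P, A_Q})`, i.e. `A', A, A_P` are consecutive vertices of the path
`T[S₁]`, `A', A, A_Q` are consecutive vertices of the path `T[S₂]`,
`A_P` does not occur in `T[S₂]` and `A_Q` does not occur in `T[S₁]`. -/
def ForkAt {M : Type*} (T : SimpleGraph M) (S₁ S₂ : Set M) (A : M) : Prop :=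
  ∃ A' AP AQ : M, A' ∈ S₁ ∧ A' ∈ S₂ ∧ A ∈ S₁ ∧ A ∈ S₂ ∧ AP ∈ S₁ ∧ AQ ∈ S₂ ∧
    T.Adj A' A ∧ T.Adj A AP ∧ T.Adj A AQ ∧ A' ≠ AP ∧ A' ≠ AQ ∧ AP ∉ S₂ ∧ AQ ∉ S₁

/-- `A₁, A₂, A₃` form a *fork triangle* around `B`. -/
def FormsForkTriangle {V : Type*} (G : SimpleGraph V) (T : SimpleGraph (MaxClique G))
    (A₁ A₂ A₃ B : MaxClique G) : Prop :=
  A₁ ≠ A₂ ∧ A₁ ≠ A₃ ∧ A₂ ≠ A₃ ∧ T.Adj B A₁ ∧ T.Adj B A₂ ∧ T.Adj B A₃ ∧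
  (∃ u : V, cliquesOf G u = {A₁, B, A₂}) ∧
  (∃ v : V, cliquesOf G v = {A₂, B, A₃}) ∧
  (∃ w : V, cliquesOf G w = {A₃, B, A₁})

/-- `B` has a fork triangle. -/
def HasForkTriangle {V : Type*} (G : SimpleGraph V) (T : SimpleGraph (MaxClique G))
    (B : MaxClique G) : Prop :=
  ∃ A₁ A₂ A₃ : MaxClique G, FormsForkTriangle G T A₁ A₂ A₃ B

/-- In the tree `T` rooted at `R`, `B` is an ancestor of `A` (equivalently, `A` is
a descendant of `B`): `B` lies on the unique path from `R` to `A`.  Every vertex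
is an ancestor/descendant of itself. -/
def IsAncestor {M : Type*} (T : SimpleGraph M) (R A B : M) : Prop :=
  ∀ p : T.Walk R A, p.IsPath → B ∈ p.support

/-- In the tree `T` rooted at `R`, `A` is a child of `P`. -/
def IsChildOf {M : Type*} (T : SimpleGraph M) (R A P : M) : Prop :=
  T.Adj P A ∧ IsAncestor T R A P

/-- `R` is a leaf of `T`: it has exactly one neighbor. -/
def IsLeaf {M : Type*} (T : SimpleGraph M) (R : M) : Prop :=
  (T.neighborSet R).ncard = 1

/-- The triple `(v₁, v₂, v₃)` *spans* the max clique `A`: `A` is the only max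
clique of `G` containing `v₁`, `v₂` and `v₃`. -/
def Spans {V : Type*} (G : SimpleGraph V) (v₁ v₂ v₃ : V) (A : Set V) : Prop :=
  IsMaximalClique G A ∧ v₁ ∈ A ∧ v₂ ∈ A ∧ v₃ ∈ A ∧
    ∀ B : Set V, IsMaximalClique G B → v₁ ∈ B → v₂ ∈ B → v₃ ∈ B → B = A

/-! If `B` had a fourth neighbour `A₄`: cutting an edge `BA` of the clique tree splits off the
branch of `A`, and a vertex of `A \ B` lies only in cliques of that branch, so it is non-adjacent
to every vertex of a clique outside the branch, except those of `A ∩ B`. Thus a vertex `c ∈ B`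
lying in two neighbours `A ≠ A'` of `B` forces `B ⊆ A ∪ A'`, as otherwise `c` is the centre of a
claw with leaves in `A \ B`, `A' \ B` and `B \ (A ∪ A')`. The vertex `u` of the fork triangle gives
`B ⊆ A₁ ∪ A₂`. As `G` is connected, `B` meets `A₄`, say at `x ∈ A₁`; then `B ⊆ A₁ ∪ A₄`, which
fails for the vertex `v` with `M_v = {A₂, B, A₃}`. -/

namespace SimpleGraph

variable {M : Type*} {T : SimpleGraph M} {A A' B C D : M}

def branch (T : SimpleGraph M) (B A : M) : Set M :=
  {C | (T.deleteEdges {s(B, A)}).Reachable A C}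

lemma self_mem_branch : A ∈ T.branch B A := Reachable.refl _

lemma eq_and_eq_of_adj_of_notMem_branch_of_mem_branch (hCD : T.Adj C D)
    (hC : C ∉ T.branch B A) (hD : D ∈ T.branch B A) : C = B ∧ D = A := by
  by_contra hne
  refine hC (hD.trans (Adj.reachable ?_))
  rw [deleteEdges_adj, Set.mem_singleton_iff, Sym2.eq_iff]
  refine ⟨hCD.symm, ?_⟩
  rintro (⟨rfl, rfl⟩ | ⟨rfl, rfl⟩)
  · exact hC self_mem_branch
  · exact hne ⟨rfl, rfl⟩

lemma IsAcyclic.notMem_branch (hT : T.IsAcyclic) (hBA : T.Adj B A) : B ∉ T.branch B A :=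
  fun h => isAcyclic_iff_forall_adj_isBridge.1 hT hBA h.symm

lemma IsAcyclic.notMem_branch_of_adj (hT : T.IsAcyclic) (hBA : T.Adj B A) (hBA' : T.Adj B A')
    (hne : A' ≠ A) : A' ∉ T.branch B A := by
  intro h
  refine hT.notMem_branch hBA (h.trans (Adj.reachable ?_))
  rw [deleteEdges_adj, Set.mem_singleton_iff, Sym2.eq_iff]
  exact ⟨hBA'.symm, by simp [hne, hBA.ne]⟩

end SimpleGraph

open SimpleGraph

theorem ClawFree.false_of_claw {V : Type*} {G : SimpleGraph V} (hG : ClawFree G)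
    {c x₁ x₂ x₃ : V} (h₁ : G.Adj c x₁) (h₂ : G.Adj c x₂) (h₃ : G.Adj c x₃)
    (h₁₂ : Gᶜ.Adj x₁ x₂) (h₁₃ : Gᶜ.Adj x₁ x₃) (h₂₃ : Gᶜ.Adj x₂ x₃) : False := by
  rw [compl_adj] at h₁₂ h₁₃ h₂₃
  let f : Fin 1 ⊕ Fin 3 → V := Sum.elim (fun _ => c) ![x₁, x₂, x₃]
  have hf : ∀ a b, G.Adj (f a) (f b) ↔ (completeBipartiteGraph (Fin 1) (Fin 3)).Adj a b := by
    rintro (a | a) (b | b) <;> fin_cases a <;> fin_cases b <;>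
      simp_all [f, adj_comm]
  refine hG.false ⟨⟨f, ?_⟩, hf _ _⟩
  rintro (a | a) (b | b) hab <;> fin_cases a <;> fin_cases b <;>
    simp_all [f, h₁.ne, h₂.ne, h₃.ne, h₁.ne', h₂.ne', h₃.ne']

section MaxClique

variable {V : Type*} {G : SimpleGraph V}

theorem SimpleGraph.IsClique.exists_maxClique_superset {s : Set V} (hs : G.IsClique s) :
    ∃ t : MaxClique G, s ⊆ t.1 := by
  obtain ⟨t, hst, ht⟩ := zorn_subset_nonempty {t | G.IsClique t}
    (fun c hc hchain _ => ⟨⋃₀ c, (isClique_sUnion hchain.directedOn).2 hc,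
      fun _ => Set.subset_sUnion_of_mem⟩) s hs
  exact ⟨⟨t, ht.1, fun u hu htu => htu.antisymm (ht.2 hu htu)⟩, hst⟩

theorem exists_maxClique_of_adj {x y : V} (h : G.Adj x y) :
    ∃ t : MaxClique G, x ∈ t.1 ∧ y ∈ t.1 := by
  obtain ⟨t, ht⟩ := (isClique_pair.2 fun _ => h).exists_maxClique_superset
  exact ⟨t, ht (Set.mem_insert x {y}), ht (Set.mem_insert_of_mem x rfl)⟩

theorem sdiff_nonempty_of_maxClique_ne {A B : MaxClique G} (h : A ≠ B) : (A.1 \ B.1).Nonempty :=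
  Set.sdiff_nonempty.2 fun hAB => h (Subtype.ext (A.2.2 B.1 B.2.1 hAB))

end MaxClique

namespace IsCliqueTree

variable {V : Type*} {G : SimpleGraph V} {T : SimpleGraph (MaxClique G)}
  {A A' B C C' : MaxClique G} {a c z : V}

theorem mem_inter_of_notMem_branch_of_mem_branch (hT : IsCliqueTree G T) (hzC : z ∈ C.1)
    (hC : C ∉ T.branch B A) (hzC' : z ∈ C'.1) (hC' : C' ∈ T.branch B A) : z ∈ B.1 ∩ A.1 := by
  obtain ⟨p⟩ := (hT.induced_connected z).preconnected ⟨C, hzC⟩ ⟨C', hzC'⟩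
  obtain ⟨d, -, hd₁, hd₂⟩ := p.exists_boundary_dart {X | X.1 ∉ T.branch B A} hC (not_not.2 hC')
  obtain ⟨h₁, h₂⟩ :=
    eq_and_eq_of_adj_of_notMem_branch_of_mem_branch (T := T) d.adj hd₁ (not_not.1 hd₂)
  exact ⟨h₁ ▸ d.fst.2, h₂ ▸ d.snd.2⟩

theorem mem_branch_of_mem_sdiff (hT : IsCliqueTree G T) (ha : a ∈ A.1 \ B.1) (haC : a ∈ C.1) :
    C ∈ T.branch B A := by
  by_contra hC
  exact ha.2 (hT.mem_inter_of_notMem_branch_of_mem_branch haC hC ha.1 self_mem_branch).1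

theorem compl_adj_of_mem_sdiff (hT : IsCliqueTree G T) (ha : a ∈ A.1 \ B.1) (hzC : z ∈ C.1)
    (hC : C ∉ T.branch B A) (hz : z ∉ B.1 ∩ A.1) : Gᶜ.Adj a z := by
  refine (compl_adj G a z).2 ⟨?_, fun haz => ?_⟩
  · rintro rfl
    exact hC (hT.mem_branch_of_mem_sdiff ha hzC)
  · obtain ⟨t, hat, hzt⟩ := exists_maxClique_of_adj haz
    exact hz (hT.mem_inter_of_notMem_branch_of_mem_branch hzC hC hzt
      (hT.mem_branch_of_mem_sdiff ha hat))

theorem inter_nonempty_of_adj (hG : G.Connected) (hT : IsCliqueTree G T) (hBA : T.Adj B A) :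
    (B.1 ∩ A.1).Nonempty := by
  by_contra hBA'
  obtain ⟨b, hbB, -⟩ := sdiff_nonempty_of_maxClique_ne hBA.ne
  obtain ⟨a, haA, -⟩ := sdiff_nonempty_of_maxClique_ne hBA.ne'
  let S : Set V := {z | ∃ C ∈ T.branch B A, z ∈ C.1}
  have hbS : b ∉ S := fun ⟨C, hC, hbC⟩ => hBA' ⟨b, hT.mem_inter_of_notMem_branch_of_mem_branch
    hbB (hT.isTree.isAcyclic.notMem_branch hBA) hbC hC⟩
  obtain ⟨p⟩ := hG.preconnected a b
  obtain ⟨d, -, ⟨C, hC, hC₁⟩, hd₂⟩ := p.exists_boundary_dart S ⟨A, self_mem_branch, haA⟩ hbS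
  obtain ⟨t, ht₁, ht₂⟩ := exists_maxClique_of_adj d.adj
  have ht : t ∉ T.branch B A := fun ht => hd₂ ⟨t, ht, ht₂⟩
  exact hBA' ⟨_, hT.mem_inter_of_notMem_branch_of_mem_branch ht₁ ht hC₁ hC⟩

theorem subset_union_of_mem_inter (hG : ClawFree G) (hT : IsCliqueTree G T) (hBA : T.Adj B A)
    (hBA' : T.Adj B A') (hne : A ≠ A') (hc : c ∈ B.1 ∩ A.1 ∩ A'.1) : B.1 ⊆ A.1 ∪ A'.1 := by
  intro z hzB
  by_contra hz
  rw [Set.mem_union, not_or] at hz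
  obtain ⟨⟨hcB, hcA⟩, hcA'⟩ := hc
  obtain ⟨a, ha⟩ := sdiff_nonempty_of_maxClique_ne hBA.ne'
  obtain ⟨a', ha'⟩ := sdiff_nonempty_of_maxClique_ne hBA'.ne'
  have hacyc := hT.isTree.isAcyclic
  refine hG.false_of_claw (A.2.1 hcA ha.1 fun h => ha.2 (h ▸ hcB))
    (A'.2.1 hcA' ha'.1 fun h => ha'.2 (h ▸ hcB))
    (B.2.1 hcB hzB fun h => hz.1 (h ▸ hcA)) ?_ ?_ ?_
  · exact hT.compl_adj_of_mem_sdiff ha ha'.1 (hacyc.notMem_branch_of_adj hBA hBA' hne.symm)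
      fun h => ha'.2 h.1
  · exact hT.compl_adj_of_mem_sdiff ha hzB (hacyc.notMem_branch hBA) fun h => hz.1 h.2
  · exact hT.compl_adj_of_mem_sdiff ha' hzB (hacyc.notMem_branch hBA') fun h => hz.2 h.2

end IsCliqueTree

theorem forkTriangle_degree_three_general {V : Type*}
    (G : SimpleGraph V) (hconn : G.Connected)
    (hcf : ClawFree G) (T : SimpleGraph (MaxClique G)) (hT : IsCliqueTree G T)
    (B : MaxClique G) (hft : HasForkTriangle G T B) :
    (T.neighborSet B).ncard = 3 := by
  obtain ⟨A₁, A₂, A₃, h₁₂, h₁₃, h₂₃, hB₁, hB₂, hB₃, ⟨u, hu⟩, ⟨v, hv⟩, ⟨w, hw⟩⟩ := hft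
  rw [Set.ext_iff] at hu hv hw
  suffices T.neighborSet B = {A₁, A₂, A₃} by
    rw [this, Set.ncard_eq_three]
    exact ⟨A₁, A₂, A₃, h₁₂, h₁₃, h₂₃, rfl⟩
  refine Set.Subset.antisymm (fun A₄ hB₄ => ?_) (by simp [Set.insert_subset_iff, hB₁, hB₂, hB₃])
  by_contra h₄
  simp only [Set.mem_insert_iff, Set.mem_singleton_iff, not_or] at h₄
  obtain ⟨x, hxB, hx₄⟩ := hT.inter_nonempty_of_adj hconn hB₄
  have hu' : u ∈ B.1 ∩ A₁.1 ∩ A₂.1 :=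
    ⟨⟨(hu B).2 (by simp), (hu A₁).2 (by simp)⟩, (hu A₂).2 (by simp)⟩
  rcases hT.subset_union_of_mem_inter hcf hB₁ hB₂ h₁₂ hu' hxB with hx₁ | hx₂
  · rcases hT.subset_union_of_mem_inter hcf hB₁ hB₄ (Ne.symm h₄.1) ⟨⟨hxB, hx₁⟩, hx₄⟩
      ((hv B).2 (by simp)) with hv₁ | hv₄
    · simpa [h₁₂, h₁₃, hB₁.ne'] using (hv A₁).1 hv₁
    · simpa [h₄, hB₄.ne'] using (hv A₄).1 hv₄
  · rcases hT.subset_union_of_mem_inter hcf hB₂ hB₄ (Ne.symm h₄.2.1) ⟨⟨hxB, hx₂⟩, hx₄⟩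
      ((hw B).2 (by simp)) with hw₂ | hw₄
    · simpa [h₁₂.symm, h₂₃, hB₂.ne'] using (hw A₂).1 hw₂
    · simpa [h₄, hB₄.ne'] using (hw A₄).1 hw₄

/-- Let `G` be a connected chordal claw-free graph with clique
tree `T`.  If a max clique `B` has a fork triangle, then the degree of `B` in
`T` is exactly 3. -/
theorem forkTriangle_degree_three {V : Type*} [Fintype V] [Nonempty V]
    (G : SimpleGraph V) (hconn : G.Connected) (hch : IsChordal G)
    (hcf : ClawFree G) (T : SimpleGraph (MaxClique G)) (hT : IsCliqueTree G T)
    (B : MaxClique G) (hft : HasForkTriangle G T B) :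
    (T.neighborSet B).ncard = 3 :=
  forkTriangle_degree_three_general G hconn hcf T hT B hft
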